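/- arXiv:0706.2447 — 6 statements merged into one kernel-verified Lean document; each statement's English description precedes it below -/
import Mathlib

section
/- If φ : A → B is a continuous unital algebra homomorphism between unital Banach algebras with dense range, then the left topological stable rank of B is at most the left topological stable rank of A. -/
/-- `n`-tuples generating `A` as a left ideal. -/
noncomputable def Lg (A : Type*) [NormedRing A] (n : ℕ) : Set (Fin n → A) :=
  {a | ∃ b : Fin n → A, ∑ i, b i * a i = 1}

/-- `n`-tuples generating `A` as a right ideal. -/
noncomputable def Rg (A : Type*) [NormedRing A] (n : ℕ) : Set (Fin n → A) :=
  {a | ∃ b : Fin n → A, ∑ i, a i * b i = 1}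

/-- The left topological stable rank. -/
noncomputable def ltsr (A : Type*) [NormedRing A] : ℕ∞ :=
  sInf {N : ℕ∞ | ∃ n : ℕ, N = n ∧ Dense (Lg A n)}

/-- The right topological stable rank. -/
noncomputable def rtsr (A : Type*) [NormedRing A] : ℕ∞ :=
  sInf {N : ℕ∞ | ∃ n : ℕ, N = n ∧ Dense (Rg A n)}


/-- A continuous unital algebra homomorphism with dense range does not increase
the left topological stable rank. -/
theorem stmt2 {A B : Type*} [NormedRing A] [NormedAlgebra ℂ A] [CompleteSpace A]
    [NormedRing B] [NormedAlgebra ℂ B] [CompleteSpace B]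
    (φ : A →ₐ[ℂ] B) (hcont : Continuous φ) (hdense : DenseRange φ) :
    ltsr B ≤ ltsr A := by
  apply sInf_le_sInf
  rintro N ⟨n, rfl, hLg⟩
  refine ⟨n, rfl, ?_⟩
  set Φ : (Fin n → A) → (Fin n → B) := fun a i => φ (a i) with hΦ
  have hΦc : Continuous Φ := continuous_pi fun i => hcont.comp (continuous_apply i)
  have hΦd : DenseRange Φ := by
    have : Set.range Φ = Set.pi Set.univ (fun _ : Fin n => Set.range (φ : A → B)) := by
      ext b
      constructor
      · rintro ⟨a, rfl⟩ i _; exact ⟨a i, rfl⟩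
      · intro hb
        choose a ha using fun i => hb i (Set.mem_univ i)
        exact ⟨a, funext ha⟩
    rw [DenseRange, this]
    exact dense_pi Set.univ fun i _ => hdense
  have himg : Dense (Φ '' Lg A n) := hΦd.dense_image hΦc hLg
  refine himg.mono ?_
  rintro _ ⟨a, ⟨b, hb⟩, rfl⟩
  refine ⟨fun i => φ (b i), ?_⟩
  simp only [hΦ]
  rw [← map_one φ, ← hb, map_sum]
  simp [map_mul]
end

section
/- If A is a unital Banach algebra and J is a closed two-sided ideal of A, then the left topological stable rank of the quotient A/J is at most the left topological stable rank of A. -/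
/-- If `J` is a closed two-sided ideal of a Banach algebra `A` and `Q = A/J` is the quotient
Banach algebra (with the quotient norm), then `ltsr (A/J) ≤ ltsr A`. -/
theorem stmt3 {A Q : Type*} [NormedRing A] [NormedAlgebra ℂ A] [CompleteSpace A]
    [NormedRing Q] [NormedAlgebra ℂ Q] [CompleteSpace Q]
    (J : TwoSidedIdeal A) (hJ : IsClosed (J : Set A))
    (π : A →ₐ[ℂ] Q) (hsurj : Function.Surjective π)
    (hker : ∀ a : A, π a = 0 ↔ a ∈ J)
    (hnorm : ∀ q : Q, ‖q‖ = sInf ((fun a : A => ‖a‖) '' {a | π a = q})) :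
    ltsr Q ≤ ltsr A := by
  -- π is norm-nonincreasing
  have hbound : ∀ x : A, ‖π x‖ ≤ ‖x‖ := by
    intro x
    rw [hnorm (π x)]
    exact csInf_le ⟨0, by rintro r ⟨a, -, rfl⟩; exact norm_nonneg a⟩ ⟨x, rfl, rfl⟩
  have hcont : Continuous π := by
    apply AddMonoidHomClass.continuous_of_bound π 1
    intro x; simpa using hbound x
  apply sInf_le_sInf
  rintro N ⟨n, rfl, hdense⟩
  refine ⟨n, rfl, ?_⟩
  -- the componentwise map
  have hfc : Continuous (fun a : Fin n → A => fun i => π (a i)) :=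
    continuous_pi fun i => hcont.comp (continuous_apply i)
  have hfsurj : Function.Surjective (fun a : Fin n → A => fun i => π (a i)) := by
    intro q
    choose a ha using fun i => hsurj (q i)
    exact ⟨a, funext ha⟩
  have himg : (fun a : Fin n → A => fun i => π (a i)) '' Lg A n ⊆ Lg Q n := by
    rintro _ ⟨a, ⟨b, hb⟩, rfl⟩
    exact ⟨fun i => π (b i), by rw [← map_one π, ← hb, map_sum]; simp⟩
  exact (hfsurj.denseRange.dense_image hfc hdense).mono himg
end

section
/- If an isometry Y : Hⁿ → H (a row operator built from operators in a closed subalgebra A of B(H)) is a proper isometry (i.e., not surjective), then no sufficiently small perturbation of its entries by elements of B(H) yields a tuple (A₁',...,Aₙ') with Σᵢ Aᵢ'Bᵢ = I for some Bᵢ ∈ B(H). Consequently, if the row space of A contains a proper isometry Hⁿ → H, then the right topological stable rank of A is at least n+1. -/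
/-!
Write `Y x = ∑ i, A i (x i)`. As an isometry, `Y` is bounded below, so its range is closed and,
`Y` not being onto, some `ξ ≠ 0` is orthogonal to it. If `‖Y - G‖ ≤ 1` and `G x = ξ`, then
`‖Y x - ξ‖² = ‖Y x‖² + ‖ξ‖²` by Pythagoras, while `‖Y x - ξ‖ = ‖(Y - G) x‖ ≤ ‖x‖ ≤ ‖Y x‖`. So no
such `G` is onto; in particular no tuple within `1 / (n + 1)` of `A` entrywise is right invertible.
For `m ≤ n`, a right invertible `m`-tuple of `𝒜` close to the first `m` entries of `A`, padded with
the remaining entries of `A`, would be such a tuple; hence `Rg 𝒜 m` is not dense.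
-/

open Function

section RowOperator

variable {𝕜 E F ι : Type*} [NontriviallyNormedField 𝕜] [NormedAddCommGroup E] [NormedSpace 𝕜 E]
  [NormedAddCommGroup F] [NormedSpace 𝕜 F] [Fintype ι]

noncomputable def rowOp (A : ι → E →L[𝕜] F) : (ι → E) →L[𝕜] F :=
  ∑ i, (A i).comp (ContinuousLinearMap.proj i)

@[simp]
theorem rowOp_apply (A : ι → E →L[𝕜] F) (x : ι → E) : rowOp A x = ∑ i, A i (x i) := by
  simp [rowOp]

theorem coe_rowOp (A : ι → E →L[𝕜] F) : ⇑(rowOp A) = fun x => ∑ i, A i (x i) :=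
  funext (rowOp_apply A)

theorem rowOp_sub (A A' : ι → E →L[𝕜] F) : rowOp (A - A') = rowOp A - rowOp A' := by
  ext x
  simp [Finset.sum_sub_distrib]

theorem norm_rowOp_le (A : ι → E →L[𝕜] F) : ‖rowOp A‖ ≤ ∑ i, ‖A i‖ := by
  refine (rowOp A).opNorm_le_bound (Finset.sum_nonneg fun i _ => norm_nonneg _) fun x => ?_
  rw [rowOp_apply, Finset.sum_mul]
  exact (norm_sum_le _ _).trans <| Finset.sum_le_sum fun i _ =>
    (A i).le_opNorm_of_le (norm_le_pi_norm x i)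

theorem surjective_rowOp_of_mem_rg {n : ℕ} {A : Fin n → E →L[𝕜] E} (hA : A ∈ Rg (E →L[𝕜] E) n) :
    Surjective (rowOp A) := by
  obtain ⟨B, hB⟩ := hA
  intro y
  refine ⟨fun i => B i y, ?_⟩
  simpa using congrArg (fun T : E →L[𝕜] E => T y) hB

theorem norm_le_norm_rowOp {A : ι → E →L[𝕜] F} (hA : ∀ x, ∑ i, ‖x i‖ ^ 2 ≤ ‖rowOp A x‖ ^ 2)
    (x : ι → E) : ‖x‖ ≤ ‖rowOp A x‖ :=
  (pi_norm_le_iff_of_nonneg (norm_nonneg _)).2 fun i =>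
    pow_le_pow_iff_left₀ (norm_nonneg _) (norm_nonneg _) two_ne_zero |>.1 <|
      (Finset.single_le_sum (fun j _ => sq_nonneg ‖x j‖) (Finset.mem_univ i)).trans (hA x)

end RowOperator

section Hilbert

variable {𝕜 E H : Type*} [RCLike 𝕜] [NormedAddCommGroup E] [NormedSpace 𝕜 E]
  [NormedAddCommGroup H] [InnerProductSpace 𝕜 H]

theorem apply_ne_of_inner_eq_zero {F G : E →L[𝕜] H} (hF : ∀ x, ‖x‖ ≤ ‖F x‖) (hFG : ‖F - G‖ ≤ 1)
    {ξ : H} (hξ : ∀ x, inner 𝕜 (F x) ξ = 0) (hξ₀ : ξ ≠ 0) (x : E) : G x ≠ ξ := by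
  rintro rfl
  have hpythagoras : ‖F x - G x‖ ^ 2 = ‖F x‖ ^ 2 + ‖G x‖ ^ 2 := by
    simp [norm_sub_sq (𝕜 := 𝕜), hξ x]
  have hclose : ‖F x - G x‖ ≤ ‖F x‖ :=
    calc ‖F x - G x‖ = ‖(F - G) x‖ := rfl
      _ ≤ ‖x‖ := by simpa using (F - G).le_of_opNorm_le hFG x
      _ ≤ ‖F x‖ := hF x
  exact hξ₀ (norm_eq_zero.1 (by nlinarith [norm_nonneg (F x - G x), norm_nonneg (G x)]))

variable [CompleteSpace E] [CompleteSpace H]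

theorem exists_ne_zero_inner_apply_eq_zero {F : E →L[𝕜] H} (hF : ∀ x, ‖x‖ ≤ ‖F x‖)
    (hsurj : ¬ Surjective F) : ∃ ξ ≠ 0, ∀ x, inner 𝕜 (F x) ξ = 0 := by
  set S := LinearMap.range (F : E →ₗ[𝕜] H)
  have hclosed : IsClosed (S : Set H) :=
    (F.antilipschitz_of_bound (K := 1) (by simpa using hF)).isClosed_range F.uniformContinuous
  have hS : Sᗮ ≠ ⊥ := by
    rw [Ne, ← Submodule.topologicalClosure_eq_top_iff, hclosed.submodule_topologicalClosure_eq]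
    exact fun h => hsurj (LinearMap.range_eq_top.1 h)
  obtain ⟨ξ, hξS, hξ₀⟩ := (Submodule.ne_bot_iff _).1 hS
  exact ⟨ξ, hξ₀, fun x => Submodule.inner_right_of_mem_orthogonal (LinearMap.mem_range_self _ x) hξS⟩

theorem not_surjective_of_norm_sub_le_one {F G : E →L[𝕜] H} (hF : ∀ x, ‖x‖ ≤ ‖F x‖)
    (hsurj : ¬ Surjective F) (hFG : ‖F - G‖ ≤ 1) : ¬ Surjective G := fun hG =>
  let ⟨ξ, hξ₀, hξ⟩ := exists_ne_zero_inner_apply_eq_zero hF hsurj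
  let ⟨x, hx⟩ := hG ξ
  apply_ne_of_inner_eq_zero hF hFG hξ hξ₀ x hx

end Hilbert

section StableRank

variable {R : Type*} [NormedRing R]

theorem map_mem_rg {R' : Type*} [NormedRing R'] (f : R →+* R') {n : ℕ} {a : Fin n → R}
    (ha : a ∈ Rg R n) : f ∘ a ∈ Rg R' n := by
  obtain ⟨b, hb⟩ := ha
  exact ⟨f ∘ b, by simpa [map_sum, map_mul] using congrArg f hb⟩

theorem append_mem_rg {m k : ℕ} {a : Fin m → R} (ha : a ∈ Rg R m) (c : Fin k → R) :
    Fin.append a c ∈ Rg R (m + k) := by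
  obtain ⟨b, hb⟩ := ha
  exact ⟨Fin.append b 0, by simpa [Fin.sum_univ_add] using hb⟩

theorem add_one_le_rtsr {N : ℕ} (h : ∀ m ≤ N, ¬ Dense (Rg R m)) : (N + 1 : ℕ∞) ≤ rtsr R := by
  refine le_sInf ?_
  rintro _ ⟨m, rfl, hm⟩
  by_contra hlt
  have : m < N + 1 := by exact_mod_cast not_le.1 hlt
  exact h m (Nat.lt_succ_iff.1 this) hm

theorem not_dense_rg_subring {S : Type*} [SetLike S R] [SubringClass S R] (s : S) {n : ℕ}
    {a : Fin n → R} (ha : ∀ i, a i ∈ s) {ε : ℝ} (hε : 0 < ε)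
    (hstable : ∀ a' : Fin n → R, (∀ i, ‖a i - a' i‖ < ε) → a' ∉ Rg R n) {m : ℕ} (hm : m ≤ n) :
    ¬ Dense (Rg s m) := by
  obtain ⟨k, rfl⟩ := Nat.exists_eq_add_of_le hm
  intro hdense
  obtain ⟨q, hq, hqRg⟩ :=
    Metric.dense_iff.1 hdense (fun j => ⟨a (Fin.castAdd k j), ha _⟩) ε hε
  refine hstable (Fin.append (fun j => (q j : R)) fun j => a (Fin.natAdd m j)) (fun i => ?_)
    (append_mem_rg (map_mem_rg (SubringClass.subtype s) hqRg) _)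
  refine Fin.addCases (fun j => ?_) (fun j => by simpa using hε) i
  have := (dist_le_pi_dist _ _ j).trans_lt (Metric.mem_ball.1 hq)
  simpa [dist_eq_norm', ← Subtype.dist_eq] using this

end StableRank

theorem stmt5_general {H : Type*} [NormedAddCommGroup H] [InnerProductSpace ℂ H] [CompleteSpace H]
    (𝒜 : Subalgebra ℂ (H →L[ℂ] H))
    (n : ℕ) (A : Fin n → H →L[ℂ] H) (hmem : ∀ i, A i ∈ 𝒜)
    (hiso : ∀ x : Fin n → H, ‖∑ i, A i (x i)‖ ^ 2 = ∑ i, ‖x i‖ ^ 2)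
    (hproper : ¬ Function.Surjective fun x : Fin n → H => ∑ i, A i (x i)) :
    (∃ ε > (0 : ℝ), ∀ A' : Fin n → H →L[ℂ] H, (∀ i, ‖A i - A' i‖ < ε) →
        ¬ ∃ B : Fin n → H →L[ℂ] H, ∑ i, A' i * B i = 1) ∧
      (n + 1 : ℕ∞) ≤ rtsr 𝒜 := by
  have hbelow : ∀ x, ‖x‖ ≤ ‖rowOp A x‖ := norm_le_norm_rowOp fun x => by rw [rowOp_apply, hiso]
  have hstable : ∀ A' : Fin n → H →L[ℂ] H, (∀ i, ‖A i - A' i‖ < 1 / (n + 1)) →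
      A' ∉ Rg (H →L[ℂ] H) n := by
    intro A' hA' hA'Rg
    refine not_surjective_of_norm_sub_le_one hbelow (by rwa [coe_rowOp]) ?_
      (surjective_rowOp_of_mem_rg hA'Rg)
    calc ‖rowOp A - rowOp A'‖ = ‖rowOp (A - A')‖ := by rw [rowOp_sub]
      _ ≤ ∑ i, ‖A i - A' i‖ := norm_rowOp_le _
      _ ≤ n * (1 / (n + 1)) := by
        simpa using Finset.sum_le_card_nsmul Finset.univ _ _ fun i _ => (hA' i).le
      _ ≤ 1 := by rw [mul_one_div, div_le_one (by positivity)]; linarith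
  exact ⟨⟨_, by positivity, hstable⟩,
    add_one_le_rtsr fun m hm => not_dense_rg_subring 𝒜 hmem (by positivity) hstable hm⟩

/-- If the row space of a closed unital subalgebra `𝒜 ⊆ B(H)` contains a proper isometry
`Hⁿ → H`, then no small perturbation of its entries is right invertible, and
`rtsr 𝒜 ≥ n + 1`. -/
theorem stmt5 {H : Type*} [NormedAddCommGroup H] [InnerProductSpace ℂ H] [CompleteSpace H]
    (𝒜 : Subalgebra ℂ (H →L[ℂ] H)) (hclosed : IsClosed (𝒜 : Set (H →L[ℂ] H)))
    (n : ℕ) (A : Fin n → H →L[ℂ] H) (hmem : ∀ i, A i ∈ 𝒜)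
    (hiso : ∀ x : Fin n → H, ‖∑ i, A i (x i)‖ ^ 2 = ∑ i, ‖x i‖ ^ 2)
    (hproper : ¬ Function.Surjective fun x : Fin n → H => ∑ i, A i (x i)) :
    (∃ ε > (0 : ℝ), ∀ A' : Fin n → H →L[ℂ] H, (∀ i, ‖A i - A' i‖ < ε) →
        ¬ ∃ B : Fin n → H →L[ℂ] H, ∑ i, A' i * B i = 1) ∧
      (n + 1 : ℕ∞) ≤ rtsr 𝒜 :=
  stmt5_general 𝒜 n A hmem hiso hproper
end

section
/- If a closed unital Banach subalgebra A of B(H) contains two isometries with mutually orthogonal ranges, then the right topological stable rank of A is infinite. -/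
/-!
Put `Wᵢ = Uⁱ V`. These are isometries with `Wᵢ⋆ Wⱼ = δᵢⱼ`, and `(Uⁿ)⋆ Wᵢ = 0` for `i < n`.
If `∑ cᵢ bᵢ = 1` with every `cᵢ` within `δ` of `Wᵢ`, multiplying on the left by `Wⱼ⋆` bounds each
`‖bⱼ‖` by `1 + δ ∑ ‖bᵢ‖`, while multiplying by `(Uⁿ)⋆` kills the main terms and forces
`1 ≤ δ ∑ ‖bᵢ‖`. Together these give `δ ≥ 1 / 2n`, so the tuple `(W₀, …, Wₙ₋₁)` has a neighbourhood
free of right generating tuples, for every `n`.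
-/

section IsometryWords

variable {R : Type*} [Ring R] [StarRing R] {u v : R}

theorem star_pow_mul_pow_self (hu : star u * u = 1) (k : ℕ) : star (u ^ k) * u ^ k = 1 := by
  induction k with
  | zero => simp
  | succ k ih => rw [pow_succ', star_mul, mul_assoc, ← mul_assoc (star u), hu, one_mul, ih]

theorem star_pow_mul_pow_of_le (hu : star u * u = 1) {i j : ℕ} (h : i ≤ j) :
    star (u ^ i) * u ^ j = u ^ (j - i) := by
  obtain ⟨d, rfl⟩ := Nat.exists_eq_add_of_le h
  rw [pow_add, ← mul_assoc, star_pow_mul_pow_self hu, one_mul, Nat.add_sub_cancel_left]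

theorem star_pow_mul_pow_of_ge (hu : star u * u = 1) {i j : ℕ} (h : j ≤ i) :
    star (u ^ i) * u ^ j = star (u ^ (i - j)) := by
  rw [← star_pow_mul_pow_of_le hu h, star_mul, star_star]

theorem star_pow_mul_eq_zero (huv : star u * v = 0) {k : ℕ} (hk : k ≠ 0) :
    star (u ^ k) * v = 0 := by
  obtain ⟨m, rfl⟩ := Nat.exists_eq_succ_of_ne_zero hk
  rw [pow_succ', star_mul, mul_assoc, huv, mul_zero]

theorem star_pow_mul_mul_pow_mul (hu : star u * u = 1) (hv : star v * v = 1)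
    (huv : star u * v = 0) (i j : ℕ) :
    star (u ^ i * v) * (u ^ j * v) = if i = j then 1 else 0 := by
  rw [star_mul, mul_assoc, ← mul_assoc (star (u ^ i))]
  rcases lt_trichotomy i j with h | rfl | h
  · rw [star_pow_mul_pow_of_le hu h.le, if_neg h.ne, ← mul_assoc,
      ← star_star (u ^ (j - i)), ← star_mul, star_pow_mul_eq_zero huv (by omega), star_zero,
      zero_mul]
  · rw [star_pow_mul_pow_self hu, one_mul, hv, if_pos rfl]
  · rw [star_pow_mul_pow_of_ge hu h.le, if_neg h.ne', star_pow_mul_eq_zero huv (by omega),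
      mul_zero]

theorem star_pow_mul_pow_mul_eq_zero (hu : star u * u = 1) (huv : star u * v = 0) {i n : ℕ}
    (h : i < n) : star (u ^ n) * (u ^ i * v) = 0 := by
  rw [← mul_assoc, star_pow_mul_pow_of_ge hu h.le, star_pow_mul_eq_zero huv (by omega)]

end IsometryWords

theorem CStarRing.norm_eq_one_of_star_mul_self_eq_one {R : Type*} [NormedRing R] [StarRing R]
    [CStarRing R] [Nontrivial R] {w : R} (hw : star w * w = 1) : ‖w‖ = 1 := by
  have h : ‖w‖ * ‖w‖ = 1 := by rw [← CStarRing.norm_star_mul_self, hw, CStarRing.norm_one]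
  nlinarith [norm_nonneg w]

theorem rtsr_eq_top_iff {A : Type*} [NormedRing A] : rtsr A = ⊤ ↔ ∀ n, ¬ Dense (Rg A n) := by
  simp only [rtsr, sInf_eq_top, Set.mem_ofPred_eq]
  constructor
  · exact fun h n hn => ENat.natCast_ne_top n (h n ⟨n, rfl, hn⟩)
  · rintro h _ ⟨n, rfl, hn⟩
    exact absurd hn (h n)

theorem RingHom.comp_mem_Rg {A B : Type*} [NormedRing A] [NormedRing B] (f : A →+* B) {n : ℕ}
    {c : Fin n → A} (hc : c ∈ Rg A n) : f ∘ c ∈ Rg B n := by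
  obtain ⟨b, hb⟩ := hc
  exact ⟨f ∘ b, by simpa [map_sum, map_mul] using congrArg f hb⟩

theorem not_dense_Rg_of_isometry {A B : Type*} [NormedRing A] [NormedRing B] (f : A →+* B)
    (hf : Isometry f) {n : ℕ} (a : Fin n → A) {ε : ℝ} (hε : 0 < ε)
    (h : ∀ c ∈ Rg B n, ε ≤ dist c (f ∘ a)) : ¬ Dense (Rg A n) := by
  intro hD
  obtain ⟨c, hca, hc⟩ := Metric.dense_iff.mp hD a ε hε
  have := h _ (f.comp_mem_Rg hc)
  rw [hf.postcomp_pi.dist_eq] at this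
  exact (Metric.mem_ball.mp hca).not_ge this

section Perturbation

variable {B : Type*} [NormedRing B] {n : ℕ}

theorem eq_sum_mul_mul_add_sum_mul_sub_mul {b c : Fin n → B} (hcb : ∑ i, c i * b i = 1)
    (w : Fin n → B) (s : B) :
    s = ∑ i, s * w i * b i + ∑ i, s * (c i - w i) * b i := by
  rw [← Finset.sum_add_distrib]
  conv_lhs => rw [← mul_one s, ← hcb, Finset.mul_sum]
  exact Finset.sum_congr rfl fun i _ => by noncomm_ring

theorem norm_sum_mul_sub_mul_le (s : B) (b c w : Fin n → B) :
    ‖∑ i, s * (c i - w i) * b i‖ ≤ ‖s‖ * dist c w * ∑ i, ‖b i‖ := by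
  rw [Finset.mul_sum]
  refine (norm_sum_le _ _).trans (Finset.sum_le_sum fun i _ => ?_)
  calc ‖s * (c i - w i) * b i‖ ≤ ‖s‖ * ‖c i - w i‖ * ‖b i‖ := norm_mul₃_le
    _ ≤ ‖s‖ * dist c w * ‖b i‖ := by
      gcongr
      rw [← dist_eq_norm]
      exact dist_le_pi_dist c w i

theorem one_le_two_mul_dist_of_mem_Rg {w x : Fin n → B} {y : B}
    (hxw : ∀ i j, x i * w j = if i = j then 1 else 0) (hx : ∀ i, ‖x i‖ ≤ 1)
    (hyw : ∀ i, y * w i = 0) (hy : y ≠ 0) {c : Fin n → B} (hc : c ∈ Rg B n) :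
    1 ≤ 2 * n * dist c w := by
  obtain ⟨b, hcb⟩ := hc
  set δ := dist c w
  set β := ∑ i, ‖b i‖
  have hyβ : 1 ≤ δ * β := by
    have hy_eq : y = ∑ i, y * (c i - w i) * b i := by
      simpa [hyw] using eq_sum_mul_mul_add_sum_mul_sub_mul hcb w y
    have h := norm_sum_mul_sub_mul_le y b c w
    rw [← hy_eq, mul_assoc] at h
    exact le_of_mul_le_mul_left (by simpa using h) (norm_pos_iff.mpr hy)
  have hb : ∀ j, ‖b j‖ ≤ 1 + δ * β := by
    intro j
    have hx_eq : x j = b j + ∑ i, x j * (c i - w i) * b i := by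
      simpa [hxw] using eq_sum_mul_mul_add_sum_mul_sub_mul hcb w (x j)
    calc ‖b j‖ = ‖x j - ∑ i, x j * (c i - w i) * b i‖ := by rw [eq_sub_of_add_eq hx_eq.symm]
      _ ≤ ‖x j‖ + ‖x j‖ * δ * β := by
        grw [norm_sub_le, norm_sum_mul_sub_mul_le]
      _ ≤ 1 + δ * β := by nlinarith [hx j, dist_nonneg (x := c) (y := w), norm_nonneg (x j)]
  have hβ : β ≤ n * (1 + δ * β) := by
    simpa [mul_add] using Finset.sum_le_sum fun j (_ : j ∈ Finset.univ) => hb j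
  nlinarith [dist_nonneg (x := c) (y := w)]

end Perturbation

theorem stmt7_general {H : Type*} [NormedAddCommGroup H] [InnerProductSpace ℂ H] [CompleteSpace H]
    [Nontrivial H]
    (𝒜 : Subalgebra ℂ (H →L[ℂ] H))
    (U V : H →L[ℂ] H) (hU : U ∈ 𝒜) (hV : V ∈ 𝒜)
    (hUiso : star U * U = 1) (hViso : star V * V = 1) (horth : star U * V = 0) :
    rtsr 𝒜 = ⊤ := by
  refine rtsr_eq_top_iff.mpr fun n => ?_
  let W : Fin n → H →L[ℂ] H := fun i => U ^ (i : ℕ) * V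
  have hW : ∀ i j, star (W i) * W j = if i = j then 1 else 0 := fun i j => by
    simp only [W, star_pow_mul_mul_pow_mul hUiso hViso horth, Fin.val_inj]
  have hW_norm : ∀ i, ‖star (W i)‖ ≤ 1 := fun i => by
    rw [norm_star, CStarRing.norm_eq_one_of_star_mul_self_eq_one (by simpa using hW i i)]
  have hUnW : ∀ i, star (U ^ n) * W i = 0 := fun i =>
    star_pow_mul_pow_mul_eq_zero hUiso horth i.isLt
  have hUn : star (U ^ n) ≠ 0 := left_ne_zero_of_mul_eq_one (star_pow_mul_pow_self hUiso n)
  refine not_dense_Rg_of_isometry (SubringClass.subtype 𝒜) isometry_subtype_coe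
    (fun i => ⟨W i, mul_mem (pow_mem hU _) hV⟩) (ε := (2 * n + 1)⁻¹) (by positivity)
    fun c hc => ?_
  have h := one_le_two_mul_dist_of_mem_Rg hW hW_norm hUnW hUn hc
  change (2 * (n : ℝ) + 1)⁻¹ ≤ dist c W
  rw [inv_le_iff_one_le_mul₀ (by positivity)]
  nlinarith [dist_nonneg (x := c) (y := W)]

/-- A closed unital subalgebra of `B(H)` containing two isometries with mutually orthogonal
ranges has infinite right topological stable rank. -/
theorem stmt7 {H : Type*} [NormedAddCommGroup H] [InnerProductSpace ℂ H] [CompleteSpace H]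
    [Nontrivial H]
    (𝒜 : Subalgebra ℂ (H →L[ℂ] H)) (hclosed : IsClosed (𝒜 : Set (H →L[ℂ] H)))
    (U V : H →L[ℂ] H) (hU : U ∈ 𝒜) (hV : V ∈ 𝒜)
    (hUiso : star U * U = 1) (hViso : star V * V = 1) (horth : star U * V = 0) :
    rtsr 𝒜 = ⊤ :=
  stmt7_general 𝒜 U V hU hV hUiso hViso horth
end

section
/- If a closed unital Banach subalgebra A of B(H) contains two co-isometries with mutually orthogonal initial spaces (i.e., U*, V* are isometries with VU* = 0), then the left topological stable rank of A is infinite. -/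
private lemma pow_costar {A : Type*} [Monoid A] [StarMul A] {u : A} (h : u * star u = 1) :
    ∀ k : ℕ, u ^ k * star (u ^ k) = 1 := by
  intro k
  induction k with
  | zero => simp
  | succ k ih =>
      rw [pow_succ, star_mul, mul_assoc, ← mul_assoc u, h, one_mul, ih]

private lemma pow_costar_ge {A : Type*} [Monoid A] [StarMul A] {u : A} (h : u * star u = 1)
    {a b : ℕ} (hab : b ≤ a) : u ^ a * star (u ^ b) = u ^ (a - b) := by
  conv_lhs => rw [← Nat.sub_add_cancel hab]
  rw [pow_add, mul_assoc, pow_costar h, mul_one]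

private lemma pow_costar_le {A : Type*} [Monoid A] [StarMul A] {u : A} (h : u * star u = 1)
    {a b : ℕ} (hab : a ≤ b) : u ^ a * star (u ^ b) = star (u ^ (b - a)) := by
  have hb : u ^ b = u ^ (b - a) * u ^ a := by rw [← pow_add, Nat.sub_add_cancel hab]
  rw [hb, star_mul, ← mul_assoc, pow_costar h, one_mul]

private lemma word_ortho {A : Type*} [Ring A] [StarRing A] {u v : A}
    (hu : u * star u = 1) (hv : v * star v = 1) (hvu : v * star u = 0) (huv : u * star v = 0)
    {n i j : ℕ} (hi : i ≤ n) (hj : j ≤ n) :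
    (u ^ (n - i) * v ^ (i + 1)) * star (u ^ (n - j) * v ^ (j + 1)) =
      if i = j then 1 else 0 := by
  have huv' : ∀ x : A, u * (star v * x) = 0 := fun x => by rw [← mul_assoc, huv, zero_mul]
  have hvu' : ∀ x : A, v * (star u * x) = 0 := fun x => by rw [← mul_assoc, hvu, zero_mul]
  rw [star_mul, mul_assoc, ← mul_assoc (v ^ (i + 1))]
  rcases lt_trichotomy i j with hij | hij | hij
  · rw [if_neg hij.ne, pow_costar_le hv (by omega : i + 1 ≤ j + 1)]
    have h1 : (j + 1) - (i + 1) = (j - i - 1) + 1 := by omega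
    have h2 : n - i = (n - i - 1) + 1 := by omega
    rw [h1, h2, pow_succ, pow_succ, star_mul]
    simp only [mul_assoc]
    rw [huv']
    simp
  · subst hij
    rw [if_pos rfl, pow_costar hv, one_mul, pow_costar hu]
  · rw [if_neg hij.ne', pow_costar_ge hv (by omega : j + 1 ≤ i + 1)]
    have h1 : (i + 1) - (j + 1) = (i - j - 1) + 1 := by omega
    have h2 : n - j = (n - j - 1) + 1 := by omega
    rw [h1, h2, pow_succ, pow_succ, star_mul]
    simp only [mul_assoc]
    rw [hvu']
    simp

/-- A closed unital subalgebra of `B(H)` containing two co-isometries with mutually orthogonal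
initial spaces has infinite left topological stable rank. -/
theorem stmt8 {H : Type*} [NormedAddCommGroup H] [InnerProductSpace ℂ H] [CompleteSpace H]
    [Nontrivial H]
    (𝒜 : Subalgebra ℂ (H →L[ℂ] H)) (hclosed : IsClosed (𝒜 : Set (H →L[ℂ] H)))
    (U V : H →L[ℂ] H) (hU : U ∈ 𝒜) (hV : V ∈ 𝒜)
    (hUco : U * star U = 1) (hVco : V * star V = 1) (horth : V * star U = 0) :
    ltsr 𝒜 = ⊤ := by
  classical
  have hUV : U * star V = 0 := by
    have h := congrArg star horth
    rwa [star_mul, star_star, star_zero] at h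
  have key : ∀ n : ℕ, ¬ Dense (Lg 𝒜 n) := by
    intro n hD
    set w : ℕ → (H →L[ℂ] H) := fun i => U ^ (n - i) * V ^ (i + 1) with hw
    have hmem : ∀ i, w i ∈ 𝒜 := fun i => mul_mem (pow_mem hU _) (pow_mem hV _)
    have hortho : ∀ i j : ℕ, i ≤ n → j ≤ n → w i * star (w j) = if i = j then 1 else 0 :=
      fun i j hi hj => word_ortho hUco hVco horth hUV hi hj
    have hco : ∀ i : ℕ, i ≤ n → w i * star (w i) = 1 := by
      intro i hi; simpa using hortho i i hi hi
    have hwnorm : ∀ i : ℕ, i ≤ n → ‖w i‖ = 1 := by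
      intro i hi
      have h1 : ‖w i‖ * ‖w i‖ = 1 := by
        rw [← CStarRing.norm_self_mul_star, hco i hi, norm_one]
      have h2 : (‖w i‖ - 1) * (‖w i‖ + 1) = 0 := by nlinarith
      rcases mul_eq_zero.mp h2 with h | h
      · linarith
      · nlinarith [norm_nonneg (w i)]
    set a0 : Fin n → ↥𝒜 := fun i => ⟨w i, hmem i⟩ with ha0
    set ε : ℝ := ((n : ℝ) + 1)⁻¹ with hε
    have hεpos : 0 < ε := by positivity
    obtain ⟨a, haball, haLg⟩ := Metric.dense_iff.mp hD a0 ε hεpos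
    obtain ⟨b, hb⟩ := haLg
    -- the B(H) versions
    set A : Fin n → (H →L[ℂ] H) := fun i => (a i : H →L[ℂ] H) with hA
    set Bb : Fin n → (H →L[ℂ] H) := fun i => (b i : H →L[ℂ] H) with hBb
    have hclose : ∀ i : Fin n, ‖A i - w i‖ < ε := by
      intro i
      have h1 := (dist_pi_lt_iff hεpos).mp (Metric.mem_ball.mp haball) i
      rw [Subtype.dist_eq, dist_eq_norm] at h1
      simpa [ha0, hA] using h1
    have hb1 : (∑ i : Fin n, Bb i * A i) = 1 := by
      have := congrArg (Subalgebra.val 𝒜) hb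
      simpa [hA, hBb] using this
    set F : H →L[ℂ] H := ∑ i : Fin n, star (w i) * (A i - w i) with hF
    set q : H →L[ℂ] H := ∑ i : Fin n, star (w i) * w i with hq
    set S : H →L[ℂ] H := ∑ i : Fin n, Bb i * w i with hS
    set R : H →L[ℂ] H := ∑ i : Fin n, star (w i) * A i with hR
    have hRqF : R = q + F := by
      rw [hR, hq, hF, ← Finset.sum_add_distrib]
      refine Finset.sum_congr rfl fun i _ => ?_
      rw [← mul_add]
      congr 1
      abel
    have hFnorm : ‖F‖ < 1 := by
      have hle : ‖F‖ ≤ ∑ _i : Fin n, ε := by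
        refine (norm_sum_le _ _).trans (Finset.sum_le_sum fun i _ => ?_)
        calc ‖star (w i) * (A i - w i)‖ ≤ ‖star (w i)‖ * ‖A i - w i‖ := norm_mul_le _ _
          _ ≤ 1 * ε := by
              apply mul_le_mul
              · rw [norm_star]; exact (hwnorm i i.2.le).le
              · exact (hclose i).le
              · exact norm_nonneg _
              · norm_num
          _ = ε := one_mul ε
      have hsc : (∑ _i : Fin n, ε) = n * ε := by
        simp [Finset.sum_const, mul_comm]
      rw [hsc] at hle
      have hlt : (n : ℝ) * ε < 1 := by
        rw [hε, mul_inv_lt_iff₀ (by positivity)]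
        linarith
      linarith
    have hwd : ∀ i j : Fin n, w i * star (w j) = if i = j then 1 else 0 := by
      intro i j
      rw [hortho i j i.2.le j.2.le]
      simp [Fin.val_eq_val]
    have hSq : S * q = S := by
      rw [hS, hq, Finset.sum_mul_sum]
      refine Finset.sum_congr rfl fun i _ => ?_
      have : ∀ j : Fin n, (Bb i * w i) * (star (w j) * w j)
          = if j = i then Bb i * w i else 0 := by
        intro j
        rw [mul_assoc, ← mul_assoc (w i), hwd i j]
        by_cases hij : i = j
        · subst hij; simp
        · rw [if_neg hij, if_neg (Ne.symm hij)]; simp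
      rw [Finset.sum_congr rfl fun j _ => this j, Finset.sum_ite_eq' Finset.univ i]
      simp
    have hSR : S * R = 1 := by
      rw [hS, hR, Finset.sum_mul_sum]
      calc (∑ i : Fin n, ∑ j : Fin n, (Bb i * w i) * (star (w j) * A j))
          = ∑ i : Fin n, Bb i * A i := by
            refine Finset.sum_congr rfl fun i _ => ?_
            have : ∀ j : Fin n, (Bb i * w i) * (star (w j) * A j)
                = if j = i then Bb i * A j else 0 := by
              intro j
              rw [mul_assoc, ← mul_assoc (w i), hwd i j]
              by_cases hij : i = j
              · subst hij; simp
              · rw [if_neg hij, if_neg (Ne.symm hij)]; simp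
            rw [Finset.sum_congr rfl fun j _ => this j, Finset.sum_ite_eq' Finset.univ i]
            simp
        _ = 1 := hb1
    -- 1 + F is invertible
    have hgeom : HasSummableGeomSeries (H →L[ℂ] H) := by infer_instance
    set u : (H →L[ℂ] H)ˣ := Units.oneSub (-F) (by simpa using hFnorm) with hu
    have huval : (u : H →L[ℂ] H) = 1 + F := by
      simp [hu, Units.oneSub, sub_neg_eq_add]
    have hS1 : S * (u : H →L[ℂ] H) = 1 := by
      rw [huval, mul_add, mul_one]
      calc S + S * F = S * q + S * F := by rw [hSq]
        _ = S * (q + F) := by rw [mul_add]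
        _ = 1 := by rw [← hRqF, hSR]
    have hSinv : S = ((u⁻¹ : (H →L[ℂ] H)ˣ) : H →L[ℂ] H) := by
      have : S * ((u : H →L[ℂ] H) * ((u⁻¹ : (H →L[ℂ] H)ˣ) : H →L[ℂ] H)) = S := by
        rw [Units.mul_inv, mul_one]
      rw [← this, ← mul_assoc, hS1, one_mul]
    -- the extra co-isometry
    set v : H →L[ℂ] H := star (w n) with hv
    have hqv : q * v = 0 := by
      rw [hq, Finset.sum_mul]
      refine Finset.sum_eq_zero fun i _ => ?_
      have h0 : w i * star (w n) = 0 := by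
        rw [hortho i n i.2.le le_rfl, if_neg (Nat.ne_of_lt i.2)]
      rw [mul_assoc, hv, h0, mul_zero]
    have hRv : R * v = F * v := by
      rw [hRqF, add_mul, hqv, zero_add]
    have hv_eq : v = S * (F * v) := by
      calc v = 1 * v := (one_mul v).symm
        _ = (S * R) * v := by rw [hSR]
        _ = S * (R * v) := by rw [mul_assoc]
        _ = S * (F * v) := by rw [hRv]
    have hv0 : v = 0 := by
      have h1 : (u : H →L[ℂ] H) * v = F * v := by
        conv_lhs => rw [hv_eq, hSinv]
        rw [← mul_assoc, Units.mul_inv, one_mul]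
      rw [huval, add_mul, one_mul] at h1
      have : v + F * v = 0 + F * v := by rw [h1, zero_add]
      exact add_right_cancel this
    have hwn : w n * v = 1 := by rw [hv]; exact hco n le_rfl
    rw [hv0, mul_zero] at hwn
    obtain ⟨x, hx⟩ := exists_ne (0 : H)
    apply hx
    calc x = (1 : H →L[ℂ] H) x := rfl
      _ = (0 : H →L[ℂ] H) x := by rw [← hwn]
      _ = 0 := rfl
  have hempty : {N : ℕ∞ | ∃ n : ℕ, N = n ∧ Dense (Lg (↥𝒜) n)} = ∅ := by
    ext N
    simp only [Set.mem_setOf_eq, Set.mem_empty_iff_false, iff_false]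
    rintro ⟨n, -, hd⟩
    exact key n hd
  rw [ltsr, hempty, sInf_empty]
end

section
/- Let H be an infinite-dimensional separable complex Hilbert space. Then the topological stable rank of B(H) is infinite: for every n, the set of n-tuples (A₁,...,Aₙ) of operators admitting Bᵢ with Σ AᵢBᵢ = I is not dense in B(H)ⁿ. -/
/-!
A Cuntz family `s₁, …, sₙ` in `B(H)` (isometries with orthogonal ranges spanning `H`; they exist
because `H ≅ Hⁿ`) makes `a ↦ ∑ aᵢ sᵢ⋆` a continuous surjection `B(H)ⁿ → B(H)` that sends
right-invertible tuples to right-invertible operators. So if right-invertible `n`-tuples were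
dense, right-invertible operators would be dense. They are not: an operator close to a
non-surjective isometry `v` is left-invertible, so a right-invertible one would be invertible,
and then so would `v⋆`. Taking adjoints exchanges left- and right-invertible tuples.
-/

open ContinuousLinearMap Function
open scoped InnerProductSpace

/-- The relations of the Cuntz algebra `𝒪ₙ`, with `t i` in place of `star (s i)`. -/
structure IsCuntzFamily {A : Type*} [Ring A] {n : ℕ} (s t : Fin n → A) : Prop where
  mul_eq_ite : ∀ i j, t i * s j = if i = j then 1 else 0
  sum_mul_eq_one : ∑ i, s i * t i = 1

namespace IsCuntzFamily

variable {A : Type*} [Ring A] {n : ℕ} {s t : Fin n → A}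

theorem not_isUnit [Nontrivial A] (h : IsCuntzFamily s t) {i j : Fin n} (hij : i ≠ j) :
    ¬IsUnit (t i) := by
  intro hu
  have hs : s j = 0 := hu.mul_right_eq_zero.mp (by simp [h.mul_eq_ite, hij])
  simpa [hs] using h.mul_eq_ite j j

theorem sum_mul_mul_sum (h : IsCuntzFamily s t) (a b : Fin n → A) :
    (∑ i, a i * t i) * (∑ j, s j * b j) = ∑ i, a i * b i := by
  simp only [Finset.sum_mul_sum, mul_assoc, ← mul_assoc (t _), h.mul_eq_ite, ite_mul, one_mul,
    zero_mul, mul_ite, mul_zero, Finset.sum_ite_eq, Finset.mem_univ, if_true]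

end IsCuntzFamily

section NormedRing

variable {A : Type*} [NormedRing A]

theorem IsCuntzFamily.dense_rightInvertible_of_dense_Rg {n : ℕ} {s t : Fin n → A}
    (h : IsCuntzFamily s t) (hD : Dense (Rg A n)) : Dense {x : A | ∃ y, x * y = 1} := by
  set Φ : (Fin n → A) → A := fun a => ∑ i, a i * t i
  have hΦ : Continuous Φ := by fun_prop
  have hsurj : Surjective Φ := fun x =>
    ⟨fun i => x * s i, by simp only [Φ, mul_assoc, ← Finset.mul_sum, h.sum_mul_eq_one, mul_one]⟩
  refine (hsurj.denseRange.dense_image hΦ hD).mono ?_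
  rintro _ ⟨a, ⟨b, hab⟩, rfl⟩
  exact ⟨∑ j, s j * b j, by rw [h.sum_mul_mul_sum, hab]⟩

/-- Near `v`, every `x` is left-invertible since `u * x` is close to `1`; a right-invertible
such `x` is then a unit, hence so is `u = (u * x) * x⁻¹`. -/
theorem not_dense_rightInvertible_of_mul_eq_one [CompleteSpace A] {u v : A} (huv : u * v = 1)
    (hu : ¬IsUnit u) : ¬Dense {x : A | ∃ y, x * y = 1} := by
  intro hD
  have hopen : IsOpen {x : A | IsUnit (u * x)} := Units.isOpen.preimage (continuous_const_mul u)
  obtain ⟨x, hux : IsUnit (u * x), y, hxy⟩ := hD.inter_open_nonempty _ hopen ⟨v, by simp [huv]⟩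
  have hx : (↑hux.unit⁻¹ * u) * x = 1 := by rw [mul_assoc]; exact hux.val_inv_mul
  have hyx : y * x = 1 := left_inv_eq_right_inv hx hxy ▸ hx
  have hy : IsUnit y := isUnit_iff_exists_and_exists.mpr ⟨⟨x, hyx⟩, ⟨x, hxy⟩⟩
  exact hu (by simpa [mul_assoc, hxy] using hux.mul hy)

theorem not_dense_Rg_of_isCuntzFamily [CompleteSpace A] [Nontrivial A]
    (hC : ∀ n, 0 < n → ∃ s t : Fin n → A, IsCuntzFamily s t) (n : ℕ) : ¬Dense (Rg A n) := by
  rcases n.eq_zero_or_pos with rfl | hn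
  · intro hD
    obtain ⟨_, b, hb⟩ := hD.nonempty
    simp at hb
  obtain ⟨s, t, h⟩ := hC n hn
  obtain ⟨s₂, t₂, h₂⟩ := hC 2 two_pos
  exact fun hD => not_dense_rightInvertible_of_mul_eq_one (by simpa using h₂.mul_eq_ite 0 0)
    (h₂.not_isUnit zero_ne_one) (h.dense_rightInvertible_of_dense_Rg hD)

theorem dense_Rg_of_dense_Lg [StarRing A] [ContinuousStar A] {n : ℕ} (hD : Dense (Lg A n)) :
    Dense (Rg A n) := by
  have hsurj : Surjective fun (a : Fin n → A) i => star (a i) :=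
    fun a => ⟨fun i => star (a i), by simp⟩
  refine (hsurj.denseRange.dense_image (by fun_prop) hD).mono ?_
  rintro _ ⟨a, ⟨b, hab⟩, rfl⟩
  exact ⟨fun i => star (b i), by simpa [← star_mul, ← star_sum] using congrArg star hab⟩

theorem rtsr_eq_top (h : ∀ n, ¬Dense (Rg A n)) : rtsr A = ⊤ := by
  rw [rtsr, sInf_eq_top]
  rintro _ ⟨n, -, hn⟩
  exact (h n hn).elim

theorem ltsr_eq_top (h : ∀ n, ¬Dense (Lg A n)) : ltsr A = ⊤ := by
  rw [ltsr, sInf_eq_top]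
  rintro _ ⟨n, -, hn⟩
  exact (h n hn).elim

end NormedRing

theorem nonempty_prod_fin_equiv (ι : Type*) [Infinite ι] {n : ℕ} (hn : n ≠ 0) :
    Nonempty (ι × Fin n ≃ ι) := by
  refine Cardinal.eq.mp ?_
  simp only [Cardinal.mk_prod, Cardinal.lift_uzero, Cardinal.mk_fin, Cardinal.lift_natCast]
  exact Cardinal.mul_eq_left (Cardinal.aleph0_le_mk ι)
    (Cardinal.natCast_lt_aleph0.le.trans (Cardinal.aleph0_le_mk ι)) (by exact_mod_cast hn)

namespace HilbertBasis

variable {ι 𝕜 E : Type*} [RCLike 𝕜] [NormedAddCommGroup E] [InnerProductSpace 𝕜 E]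

theorem continuousLinearMap_ext {F : Type*} [NormedAddCommGroup F] [InnerProductSpace 𝕜 F]
    (b : HilbertBasis ι 𝕜 E) {f g : E →L[𝕜] F} (h : ∀ i, f (b i) = g (b i)) : f = g :=
  ContinuousLinearMap.ext_on (Submodule.dense_iff_topologicalClosure_eq_top.mpr b.dense_span)
    (Set.forall_mem_range.mpr h)

theorem infinite_of_not_finiteDimensional (b : HilbertBasis ι 𝕜 E)
    (h : ¬FiniteDimensional 𝕜 E) : Infinite ι := by
  by_contra hfin
  have : Fintype ι := @Fintype.ofFinite ι (not_infinite_iff_finite.mp hfin)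
  exact h (Module.Finite.of_basis b.toOrthonormalBasis.toBasis)

variable [CompleteSpace E]

noncomputable def isometryOfOrthonormal (b : HilbertBasis ι 𝕜 E) {v : ι → E}
    (hv : Orthonormal 𝕜 v) : E →L[𝕜] E :=
  (hv.orthogonalFamily.linearIsometry.comp b.repr.toLinearIsometry).toContinuousLinearMap

section

variable (b : HilbertBasis ι 𝕜 E) {v : ι → E} (hv : Orthonormal 𝕜 v)

theorem isometryOfOrthonormal_apply (i : ι) : b.isometryOfOrthonormal hv (b i) = v i := by
  classical
  simp [isometryOfOrthonormal, b.repr_self]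

theorem adjoint_comp_isometryOfOrthonormal :
    adjoint (b.isometryOfOrthonormal hv) ∘L b.isometryOfOrthonormal hv = 1 :=
  (isometry_iff_adjoint_comp_self _).mp (LinearIsometry.isometry _)

theorem adjoint_isometryOfOrthonormal_apply (i : ι) :
    adjoint (b.isometryOfOrthonormal hv) (v i) = b i := by
  rw [← b.isometryOfOrthonormal_apply hv, ← ContinuousLinearMap.comp_apply,
    adjoint_comp_isometryOfOrthonormal, one_apply_eq_self]

theorem adjoint_isometryOfOrthonormal_apply_eq_zero {y : E} (hy : ∀ i, ⟪v i, y⟫_𝕜 = 0) :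
    adjoint (b.isometryOfOrthonormal hv) y = 0 :=
  b.repr.injective <| by
    ext i
    simp [b.repr_apply_apply, adjoint_inner_right, isometryOfOrthonormal_apply, hy]

end

/-- `sⱼ` maps `b` isometrically onto the `j`-th of the `n` subfamilies into which `e` splits `b`. -/
theorem exists_isCuntzFamily (b : HilbertBasis ι 𝕜 E) {n : ℕ} (e : ι × Fin n ≃ ι) :
    ∃ s t : Fin n → E →L[𝕜] E, IsCuntzFamily s t := by
  have hv (j : Fin n) : Orthonormal 𝕜 fun k => b (e (k, j)) :=
    b.orthonormal.comp _ (e.injective.comp (Prod.mk_left_injective j))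
  have hadj : ∀ i j k, adjoint (b.isometryOfOrthonormal (hv i)) (b (e (k, j))) =
      if i = j then b k else 0 := by
    intro i j k
    split_ifs with hij
    · subst hij
      exact b.adjoint_isometryOfOrthonormal_apply (hv i) k
    · refine b.adjoint_isometryOfOrthonormal_apply_eq_zero (hv i) fun l => ?_
      exact b.orthonormal.2 (e.injective.ne (by simp [hij]))
  refine ⟨fun j => b.isometryOfOrthonormal (hv j),
    fun j => adjoint (b.isometryOfOrthonormal (hv j)), ?_, ?_⟩
  · intro i j
    refine b.continuousLinearMap_ext fun k => ?_
    simp only [mul_apply_eq_comp, b.isometryOfOrthonormal_apply, hadj]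
    split_ifs <;> simp
  · refine b.continuousLinearMap_ext fun m => ?_
    obtain ⟨⟨k, j⟩, rfl⟩ := e.surjective m
    simp [sum_apply, hadj, apply_ite, b.isometryOfOrthonormal_apply]

end HilbertBasis

theorem exists_isCuntzFamily_of_not_finiteDimensional {𝕜 E : Type*} [RCLike 𝕜]
    [NormedAddCommGroup E] [InnerProductSpace 𝕜 E] [CompleteSpace E]
    (h : ¬FiniteDimensional 𝕜 E) {n : ℕ} (hn : 0 < n) :
    ∃ s t : Fin n → E →L[𝕜] E, IsCuntzFamily s t := by
  obtain ⟨w, b, -⟩ := exists_hilbertBasis 𝕜 E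
  have := b.infinite_of_not_finiteDimensional h
  obtain ⟨e⟩ := nonempty_prod_fin_equiv w hn.ne'
  exact b.exists_isCuntzFamily e

theorem stmt9_general {H : Type*} [NormedAddCommGroup H] [InnerProductSpace ℂ H] [CompleteSpace H]
    (hinf : ¬ FiniteDimensional ℂ H) :
    (∀ n : ℕ, ¬ Dense (Rg (H →L[ℂ] H) n)) ∧
      rtsr (H →L[ℂ] H) = ⊤ ∧ ltsr (H →L[ℂ] H) = ⊤ := by
  have : Nontrivial H := not_subsingleton_iff_nontrivial.mp fun _ => hinf inferInstance
  have hRg : ∀ n, ¬Dense (Rg (H →L[ℂ] H) n) :=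
    not_dense_Rg_of_isCuntzFamily fun _ => exists_isCuntzFamily_of_not_finiteDimensional hinf
  exact ⟨hRg, rtsr_eq_top hRg, ltsr_eq_top fun n hL => hRg n (dense_Rg_of_dense_Lg hL)⟩

/-- For an infinite-dimensional separable complex Hilbert space `H`, the topological stable
rank of `B(H)` is infinite: for every `n`, the right-invertible `n`-tuples are not dense. -/
theorem stmt9 {H : Type*} [NormedAddCommGroup H] [InnerProductSpace ℂ H] [CompleteSpace H]
    [TopologicalSpace.SeparableSpace H] (hinf : ¬ FiniteDimensional ℂ H) :
    (∀ n : ℕ, ¬ Dense (Rg (H →L[ℂ] H) n)) ∧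
      rtsr (H →L[ℂ] H) = ⊤ ∧ ltsr (H →L[ℂ] H) = ⊤ :=
  stmt9_general hinf
end
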